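/- Test-time training descent theorem: Let L_m(x,y;θ) be differentiable, convex, and β-smooth in θ, with ‖∇_θ L_m(x,y;θ)‖ ≤ G and ‖∇_θ L_s(x;θ)‖ ≤ G for all θ, where L_s(x;θ) is a differentiable self-supervised loss. Fix learning rate η = ε/(βG²). Then for every (x,y) with ⟨∇_θ L_m(x,y;θ), ∇_θ L_s(x;θ)⟩ > ε > 0, the updated parameters θ(x) = θ - η∇_θ L_s(x;θ) satisfy L_m(x,y;θ(x)) < L_m(x,y;θ). -/

import Mathlib

/-!
The descent lemma: if `∇f` is `β`-Lipschitz then `f (x + v) ≤ f x + ⟪∇f x, v⟫ + β/2 ‖v‖²`,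
since along the segment `t ↦ x + t v` the slope grows by at most `β t ‖v‖²`. Taking
`v = -η g` with `η = ε / (β G²)` and `‖g‖ ≤ G`, the quadratic term is at most `η ε / 2`,
while the linear term is `-η ⟪∇f x, g⟫ < -η ε`.
-/

open Set InnerProductSpace

section Descent

variable {E : Type*} [NormedAddCommGroup E] [NormedSpace ℝ E]

theorem image_add_le_of_fderiv_lipschitz {f : E → ℝ} {f' : E → E →L[ℝ] ℝ} {β : ℝ}
    (hf : ∀ x, HasFDerivAt f (f' x) x) (hf' : ∀ x y, ‖f' x - f' y‖ ≤ β * ‖x - y‖) (x v : E) :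
    f (x + v) ≤ f x + f' x v + β / 2 * ‖v‖ ^ 2 := by
  have hφ : ∀ t : ℝ, HasDerivAt (fun t : ℝ ↦ f (x + t • v)) (f' (x + t • v) v) t := fun t ↦ by
    simpa [Function.comp_def] using
      (hf _).comp_hasDerivAt t (((hasDerivAt_id' t).smul_const v).const_add x)
  have hB : ∀ t : ℝ, HasDerivAt (fun t : ℝ ↦ f x + t * f' x v + β / 2 * t ^ 2 * ‖v‖ ^ 2)
      (f' x v + β * t * ‖v‖ ^ 2) t := fun t ↦ by
    refine ((((hasDerivAt_id t).mul_const (f' x v)).const_add (f x)).add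
      (((hasDerivAt_pow 2 t).const_mul (β / 2)).mul_const (‖v‖ ^ 2))).congr_deriv ?_
    simp only [one_mul, Nat.cast_ofNat, Nat.add_one_sub_one, pow_one]
    ring
  have hslope : ∀ t ∈ Ico (0 : ℝ) 1, f' (x + t • v) v ≤ f' x v + β * t * ‖v‖ ^ 2 := by
    rintro t ⟨ht, -⟩
    calc f' (x + t • v) v = f' x v + (f' (x + t • v) - f' x) v := by simp
      _ ≤ f' x v + ‖f' (x + t • v) - f' x‖ * ‖v‖ := by
        gcongr; exact (le_abs_self _).trans ((f' (x + t • v) - f' x).le_opNorm v)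
      _ ≤ f' x v + β * ‖t • v‖ * ‖v‖ := by
        gcongr; simpa using hf' (x + t • v) x
      _ = f' x v + β * t * ‖v‖ ^ 2 := by rw [norm_smul, Real.norm_of_nonneg ht]; ring
  simpa using image_le_of_deriv_right_le_deriv_boundary
    (fun t _ ↦ (hφ t).continuousAt.continuousWithinAt) (fun t _ ↦ (hφ t).hasDerivWithinAt)
    (by simp) (fun t _ ↦ (hB t).continuousAt.continuousWithinAt)
    (fun t _ ↦ (hB t).hasDerivWithinAt) hslope (right_mem_Icc.2 zero_le_one)

end Descent

section Gradient

variable {F : Type*} [NormedAddCommGroup F] [InnerProductSpace ℝ F] [CompleteSpace F]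

theorem image_add_le_of_gradient_lipschitz {f : F → ℝ} {β : ℝ} (hf : ∀ x, DifferentiableAt ℝ f x)
    (hsmooth : ∀ x y, ‖gradient f x - gradient f y‖ ≤ β * ‖x - y‖) (x v : F) :
    f (x + v) ≤ f x + inner ℝ (gradient f x) v + β / 2 * ‖v‖ ^ 2 :=
  image_add_le_of_fderiv_lipschitz (f' := fun x ↦ toDual ℝ F (gradient f x))
    (fun x ↦ (hf x).hasGradientAt.hasFDerivAt)
    (fun x y ↦ by rw [← map_sub, LinearIsometryEquiv.norm_map]; exact hsmooth x y) x v

theorem image_sub_smul_lt_of_inner_gradient_gt {f : F → ℝ} {β G ε : ℝ} (hβ : 0 < β) (hG : 0 < G)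
    (hε : 0 < ε) (hf : ∀ x, DifferentiableAt ℝ f x)
    (hsmooth : ∀ x y, ‖gradient f x - gradient f y‖ ≤ β * ‖x - y‖) {x g : F} (hg : ‖g‖ ≤ G)
    (hinner : ε < inner ℝ (gradient f x) g) :
    f (x - (ε / (β * G ^ 2)) • g) < f x := by
  set η := ε / (β * G ^ 2)
  have hη : 0 < η := by positivity
  have hquad : β / 2 * ‖η • g‖ ^ 2 ≤ η * ε / 2 := by
    calc β / 2 * ‖η • g‖ ^ 2 = β / 2 * η ^ 2 * ‖g‖ ^ 2 := by
          rw [norm_smul, Real.norm_of_nonneg hη.le]; ring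
      _ ≤ β / 2 * η ^ 2 * G ^ 2 := by gcongr
      _ = η * ε / 2 := by simp only [η]; field_simp
  have hdescent := image_add_le_of_gradient_lipschitz hf hsmooth x (-(η • g))
  rw [← sub_eq_add_neg, inner_neg_right, real_inner_smul_right, norm_neg] at hdescent
  have hgain : η * ε < η * inner ℝ (gradient f x) g := mul_lt_mul_of_pos_left hinner hη
  linarith [mul_pos hη hε]
end Gradient

theorem test_time_training_descent_general (d : ℕ) {X Y : Type*}
    (Lm : X → Y → EuclideanSpace ℝ (Fin d) → ℝ)
    (Ls : X → EuclideanSpace ℝ (Fin d) → ℝ)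
    (β G ε : ℝ) (hβ : 0 < β) (hG : 0 < G) (hε : 0 < ε)
    (hmdiff : ∀ x y θ, DifferentiableAt ℝ (Lm x y) θ)
    (hsmooth : ∀ x y θ₁ θ₂,
      ‖gradient (Lm x y) θ₁ - gradient (Lm x y) θ₂‖ ≤ β * ‖θ₁ - θ₂‖)
    (hGs : ∀ x θ, ‖gradient (Ls x) θ‖ ≤ G) :
    ∀ (x : X) (y : Y) (θ : EuclideanSpace ℝ (Fin d)),
      (inner ℝ (gradient (Lm x y) θ) (gradient (Ls x) θ) : ℝ) > ε →
      Lm x y (θ - (ε / (β * G^2)) • gradient (Ls x) θ) < Lm x y θ :=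
  fun x y θ hinner ↦ image_sub_smul_lt_of_inner_gradient_gt hβ hG hε (hmdiff x y) (hsmooth x y)
    (hGs x θ) hinner

theorem test_time_training_descent (d : ℕ) {X Y : Type*}
    (Lm : X → Y → EuclideanSpace ℝ (Fin d) → ℝ)
    (Ls : X → EuclideanSpace ℝ (Fin d) → ℝ)
    (β G ε : ℝ) (hβ : 0 < β) (hG : 0 < G) (hε : 0 < ε)
    (hmdiff : ∀ x y θ, DifferentiableAt ℝ (Lm x y) θ)
    (hsdiff : ∀ x θ, DifferentiableAt ℝ (Ls x) θ)
    (hconv : ∀ x y, ConvexOn ℝ Set.univ (Lm x y))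
    (hsmooth : ∀ x y θ₁ θ₂,
      ‖gradient (Lm x y) θ₁ - gradient (Lm x y) θ₂‖ ≤ β * ‖θ₁ - θ₂‖)
    (hGm : ∀ x y θ, ‖gradient (Lm x y) θ‖ ≤ G)
    (hGs : ∀ x θ, ‖gradient (Ls x) θ‖ ≤ G) :
    ∀ (x : X) (y : Y) (θ : EuclideanSpace ℝ (Fin d)),
      (inner ℝ (gradient (Lm x y) θ) (gradient (Ls x) θ) : ℝ) > ε →
      Lm x y (θ - (ε / (β * G^2)) • gradient (Ls x) θ) < Lm x y θ :=
  test_time_training_descent_general d Lm Ls β G ε hβ hG hε hmdiff hsmooth hGs
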